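/- For every n ∈ ℕ₀ and every connected graph G ∈ 𝒢_n, the function x ↦ J_n(G,x) is integrable on ℝ^d with ∫_{ℝ^d} J_n(G,x) dx ≤ m_φ^{n+1}. -/

import Mathlib

open MeasureTheory Finset
open scoped ENNReal Classical

noncomputable section

/-- The interior vertices `{1,…,n}` of the vertex set `{0,1,…,n+1}` (as `Fin (n+2)`). -/
def interiorVerts (n : ℕ) : Finset (Fin (n + 2)) :=
  Finset.univ.filter fun v => v ≠ 0 ∧ v ≠ Fin.last (n + 1)

/-- `ConnIn G a b S` : there is a path from `a` to `b` in `G` using only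
vertices in `S ∪ {a, b}`. -/
def ConnIn {k : ℕ} (G : SimpleGraph (Fin k)) (a b : Fin k) (S : Set (Fin k)) : Prop :=
  ∃ w : G.Walk a b, ∀ v ∈ w.support, v = a ∨ v = b ∨ v ∈ S

/-- `π_n(G) = Σ_{I ⊆ [n]} (-1)^{n-|I|} 1{0 ↔ n+1 in G|I}`. -/
def piFun (n : ℕ) (G : SimpleGraph (Fin (n + 2))) : ℤ :=
  ∑ I ∈ (interiorVerts n).powerset,
    (-1 : ℤ) ^ (n - I.card) *
      (if ConnIn G 0 (Fin.last (n + 1)) ↑I then 1 else 0)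

/-- The number of edges of `G`, counted via ordered pairs `i < j`. -/
def edgeCount {k : ℕ} (G : SimpleGraph (Fin k)) : ℕ :=
  (Finset.univ.filter fun p : Fin k × Fin k => p.1 < p.2 ∧ G.Adj p.1 p.2).card

/-- `κ_n(H) = Σ_{G ∈ 𝒢_n, E(G) ⊆ E(H)} (-1)^{|E(H)|-|E(G)|} π_n(G)`. -/
def kappaFun (n : ℕ) (H : SimpleGraph (Fin (n + 2))) : ℤ :=
  ∑ G ∈ Finset.univ.filter
      (fun G : SimpleGraph (Fin (n + 2)) => G.Connected ∧ G ≤ H),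
    (-1 : ℤ) ^ (edgeCount H - edgeCount G) * piFun n G

/-- The point configuration `x₀ = 0`, `x₁,…,x_n = xs`, `x_{n+1} = x`. -/
def pts {d n : ℕ} (x : EuclideanSpace ℝ (Fin d)) (xs : Fin n → EuclideanSpace ℝ (Fin d)) :
    Fin (n + 2) → EuclideanSpace ℝ (Fin d) :=
  Fin.cons 0 (Fin.snoc xs x)

/-- `∏_{{i,j} ∈ E(G)} φ(y_i - y_j)`, product over ordered pairs `i < j`. -/
def edgeProd {d k : ℕ} (φ : EuclideanSpace ℝ (Fin d) → ℝ)
    (G : SimpleGraph (Fin k)) (y : Fin k → EuclideanSpace ℝ (Fin d)) : ℝ :=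
  ∏ p ∈ Finset.univ.filter (fun p : Fin k × Fin k => p.1 < p.2 ∧ G.Adj p.1 p.2),
    φ (y p.1 - y p.2)

/-- `J_n(G,x) = ∫ ∏_{{i,j} ∈ E(G)} φ(x_i - x_j) d(x₁,…,x_n)` with `x₀ = 0`, `x_{n+1} = x`. -/
def Jfun {d : ℕ} (φ : EuclideanSpace ℝ (Fin d) → ℝ) (n : ℕ)
    (G : SimpleGraph (Fin (n + 2))) (x : EuclideanSpace ℝ (Fin d)) : ℝ :=
  ∫ xs : Fin n → EuclideanSpace ℝ (Fin d), edgeProd φ G (pts x xs)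

/-- `I_n(G,x) = ∫ ∏_{{i,j} ∈ E(G)} φ(x_i-x_j) ∏_{{i,j} ∉ E(G)} (1 - φ(x_i-x_j)) d(x₁,…,x_n)`. -/
def Ifun {d : ℕ} (φ : EuclideanSpace ℝ (Fin d) → ℝ) (n : ℕ)
    (G : SimpleGraph (Fin (n + 2))) (x : EuclideanSpace ℝ (Fin d)) : ℝ :=
  ∫ xs : Fin n → EuclideanSpace ℝ (Fin d),
    edgeProd φ G (pts x xs) *
      ∏ p ∈ Finset.univ.filter
          (fun p : Fin (n + 2) × Fin (n + 2) => p.1 < p.2 ∧ ¬ G.Adj p.1 p.2),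
        (1 - φ (pts x xs p.1 - pts x xs p.2))

/-- `p_n(x) = (1/n!) Σ_{H ∈ 𝒢_n} κ_n(H) J_n(H,x)`. -/
def pFun {d : ℕ} (φ : EuclideanSpace ℝ (Fin d) → ℝ) (n : ℕ)
    (x : EuclideanSpace ℝ (Fin d)) : ℝ :=
  (Nat.factorial n : ℝ)⁻¹ *
    ∑ H ∈ Finset.univ.filter (fun H : SimpleGraph (Fin (n + 2)) => H.Connected),
      (kappaFun n H : ℝ) * Jfun φ n H x

/-!
Since `0 ≤ φ ≤ 1`, the product over the edges of `G` is at most the product over the edges of a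
spanning tree, obtained by joining every vertex `v ≠ 0` to a neighbour closer to `0`. Integrating
out the vertices of this tree, deepest first, each of the `n + 1` non-root vertices contributes a
factor `∫ φ = m_φ`, Lebesgue measure being invariant under translations and reflections.
-/

namespace SimpleGraph

variable {V : Type*} {G : SimpleGraph V}

theorem Connected.exists_adj_dist_lt (hG : G.Connected) {u v : V} (h : v ≠ u) :
    ∃ w, G.Adj v w ∧ G.dist w u < G.dist v u := by
  obtain ⟨p, hp⟩ := hG.exists_walk_length_eq_dist v u
  cases p with
  | nil => exact absurd rfl h
  | cons hadj q => exact ⟨_, hadj, (dist_le q).trans_lt (by simp [← hp])⟩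

theorem prod_edges_le_prod_parent {M : Type*} [Fintype V] [LinearOrder V] [CommMonoid M]
    [Preorder M] [MulLeftMono M] (G : SimpleGraph V) [DecidableRel G.Adj] (f : V → V → M)
    (hf : ∀ a b, f a b ≤ 1) (p : V → V) (D : V → ℕ) (S : Finset V)
    (hadj : ∀ v ∈ S, G.Adj v (p v)) (hD : ∀ v ∈ S, D (p v) < D v) :
    ∏ q ∈ univ.filter (fun q : V × V => q.1 < q.2 ∧ G.Adj q.1 q.2), f q.1 q.2
      ≤ ∏ v ∈ S, f (min v (p v)) (max v (p v)) := by
  set o : V → V × V := fun v => (min v (p v), max v (p v))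
  have hmem : ∀ v ∈ S, o v ∈ univ.filter (fun q : V × V => q.1 < q.2 ∧ G.Adj q.1 q.2) := by
    intro v hv
    have := hadj v hv
    rcases lt_or_gt_of_ne this.ne with h | h
    · simp [o, h, h.le, this]
    · simp [o, h, h.le, this.symm]
  have hinj : Set.InjOn o S := by
    intro a ha b hb hab
    have hDa := hD a ha
    have hDb := hD b hb
    simp only [o, Prod.mk.injEq] at hab
    rcases le_total a (p a) with h₁ | h₁ <;> rcases le_total b (p b) with h₂ | h₂ <;>
      simp only [min_eq_left, min_eq_right, max_eq_left, max_eq_right, h₁, h₂] at hab <;>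
      grind
  calc ∏ q ∈ univ.filter (fun q : V × V => q.1 < q.2 ∧ G.Adj q.1 q.2), f q.1 q.2
      ≤ ∏ q ∈ S.image o, f q.1 q.2 :=
        prod_le_prod_of_subset_of_le_one' (image_subset_iff.2 hmem) fun _ _ _ => hf _ _
    _ = ∏ v ∈ S, f (o v).1 (o v).2 := prod_image hinj

end SimpleGraph

section Marginal

open Function

variable {ι α : Type*} [MeasurableSpace α] (μ : Measure α) [SigmaFinite μ]

theorem lmarginal_prod_parent_le_pow [DecidableEq ι] (k : ι → α → α → ℝ≥0∞)
    (hk : ∀ v, Measurable (uncurry (k v))) {M : ℝ≥0∞}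
    (hM : ∀ v c, ∫⁻ t, k v t c ∂μ ≤ M) (p : ι → ι) (D : ι → ℕ) (S : Finset ι)
    (hD : ∀ v ∈ S, D (p v) < D v) (y : ι → α) :
    (∫⋯∫⁻_S, (fun z => ∏ v ∈ S, k v (z v) (z (p v))) ∂fun _ => μ) y ≤ M ^ #S := by
  have hmeas : ∀ T : Finset ι, Measurable fun z : ι → α => ∏ v ∈ T, k v (z v) (z (p v)) :=
    fun T => Finset.measurable_prod _ fun v _ =>
      (hk v).comp (f := fun z : ι → α => (z v, z (p v))) (by fun_prop)
  induction S using Finset.induction_on_max_value D generalizing y with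
  | empty => simp
  | insert a S haS hmax ih =>
    have hpa : p a ≠ a := fun h => (hD a (mem_insert_self a S)).ne (congrArg D h)
    -- `a` has maximal depth, so it is nobody's parent: integrating out `z a` only sees `k a`.
    have hsplit : ∀ z t, ∏ v ∈ insert a S, k v (update z a t v) (update z a t (p v))
        = k a t (z (p a)) * ∏ v ∈ S, k v (z v) (z (p v)) := by
      intro z t
      rw [prod_insert haS, update_self, update_of_ne hpa]
      congr 1
      refine prod_congr rfl fun v hv => ?_
      have hpv : p v ≠ a := fun h =>
        ((hD v (mem_insert_of_mem hv)).trans_le (h ▸ hmax v hv)).ne rfl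
      rw [update_of_ne (ne_of_mem_of_not_mem hv haS), update_of_ne hpv]
    calc (∫⋯∫⁻_insert a S, (fun z => ∏ v ∈ insert a S, k v (z v) (z (p v))) ∂fun _ => μ) y
        = (∫⋯∫⁻_S, (fun z => (∫⁻ t, k a t (z (p a)) ∂μ) *
            ∏ v ∈ S, k v (z v) (z (p v))) ∂fun _ => μ) y := by
          rw [lmarginal_insert' _ (hmeas _) haS]
          refine congrArg (fun g => (∫⋯∫⁻_S, g ∂fun _ => μ) y) (funext fun z => ?_)
          simp_rw [hsplit]
          exact lintegral_mul_const _ ((hk a).comp (f := fun t => (t, z (p a))) (by fun_prop))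
      _ ≤ (∫⋯∫⁻_S, (fun z => M * ∏ v ∈ S, k v (z v) (z (p v))) ∂fun _ => μ) y :=
          lmarginal_mono (fun z => by gcongr; exact hM a _) y
      _ = M * (∫⋯∫⁻_S, (fun z => ∏ v ∈ S, k v (z v) (z (p v))) ∂fun _ => μ) y :=
          lintegral_const_mul M ((hmeas S).comp measurable_updateFinset)
      _ ≤ M * M ^ #S := by gcongr; exact ih (fun v hv => hD v (mem_insert_of_mem hv)) y
      _ = M ^ #(insert a S) := by rw [card_insert_of_notMem haS, pow_succ']

theorem measurePreserving_snoc {n : ℕ} :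
    MeasurePreserving (fun q : α × (Fin n → α) => (Fin.snoc q.2 q.1 : Fin (n + 1) → α))
      (μ.prod (Measure.pi fun _ => μ)) (Measure.pi fun _ => μ) := by
  convert (measurePreserving_piFinSuccAbove (fun _ => μ) (Fin.last n)).symm using 1
  ext q : 1
  simp [MeasurableEquiv.piFinSuccAbove_symm_apply]
  rfl

theorem measurable_fin_cons {n : ℕ} (a : α) :
    Measurable fun z : Fin n → α => (Fin.cons a z : Fin (n + 1) → α) := by
  convert (MeasurableEquiv.piFinSuccAbove (fun _ => α) 0).symm.measurable.comp
    (measurable_prodMk_left (x := a)) using 1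
  ext z : 1
  simp [MeasurableEquiv.piFinSuccAbove_symm_apply]
  rfl

theorem lmarginal_image_succ {n : ℕ} {f : (Fin (n + 2) → α) → ℝ≥0∞} (hf : Measurable f)
    (y : Fin (n + 2) → α) :
    (∫⋯∫⁻_(univ.image Fin.succ), f ∂fun _ => μ) y
      = ∫⁻ z, f (Fin.cons (y 0) z) ∂Measure.pi fun _ => μ := by
  have hcons : (∫⋯∫⁻_(univ.image Fin.succ), f ∂fun _ => μ) y
      = (∫⋯∫⁻_(univ.image Fin.succ), fun z => f (Fin.cons (y 0) fun i => z i.succ)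
          ∂fun _ => μ) y := by
    refine lintegral_congr fun z => congrArg f ?_
    conv_lhs => rw [← Fin.cons_self_tail (updateFinset y _ z)]
    congr 1
    simp [updateFinset]
  rw [hcons]
  exact (lmarginal_image (Fin.succ_injective _) univ (hf.comp (measurable_fin_cons _)) y).trans
    (by rw [lmarginal_univ]; rfl)

end Marginal

theorem integrable_and_integral_le_of_lintegral_ofReal_le {α : Type*} [MeasurableSpace α]
    {μ : Measure α} {f : α → ℝ} {B : ℝ} (hf : AEStronglyMeasurable f μ) (h0 : 0 ≤ᵐ[μ] f)
    (hB : 0 ≤ B) (h : ∫⁻ x, ENNReal.ofReal (f x) ∂μ ≤ ENNReal.ofReal B) :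
    Integrable f μ ∧ ∫ x, f x ∂μ ≤ B :=
  ⟨⟨hf, (hasFiniteIntegral_iff_ofReal h0).2 (h.trans_lt ENNReal.ofReal_lt_top)⟩,
    (integral_eq_lintegral_of_nonneg_ae h0 hf).trans_le (ENNReal.toReal_le_of_le_ofReal hB h)⟩

section Cluster

variable {d : ℕ} {φ : EuclideanSpace ℝ (Fin d) → ℝ}

theorem measurable_pts {n : ℕ} :
    Measurable fun q : EuclideanSpace ℝ (Fin d) × (Fin n → EuclideanSpace ℝ (Fin d)) =>
      pts q.1 q.2 :=
  (measurable_fin_cons _).comp (measurePreserving_snoc volume).measurable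

theorem measurable_edgeProd (hφ : Measurable φ) {k : ℕ} (G : SimpleGraph (Fin k)) :
    Measurable (edgeProd φ G) :=
  Finset.measurable_prod _ fun q _ =>
    hφ.comp ((measurable_pi_apply q.1).sub (measurable_pi_apply q.2))

theorem edgeProd_nonneg (hφ : ∀ x, 0 ≤ φ x) {k : ℕ} (G : SimpleGraph (Fin k))
    (y : Fin k → EuclideanSpace ℝ (Fin d)) : 0 ≤ edgeProd φ G y :=
  prod_nonneg fun _ _ => hφ _

-- `edgeProd` orients every edge from the smaller to the larger vertex, hence the two cases.
theorem ofReal_edgeProd_le_prod_parent (hφ : ∀ x, φ x ∈ Set.Icc (0 : ℝ) 1) {k : ℕ}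
    (G : SimpleGraph (Fin k)) (p : Fin k → Fin k) (D : Fin k → ℕ) (S : Finset (Fin k))
    (hadj : ∀ v ∈ S, G.Adj v (p v)) (hD : ∀ v ∈ S, D (p v) < D v)
    (y : Fin k → EuclideanSpace ℝ (Fin d)) :
    ENNReal.ofReal (edgeProd φ G y) ≤ ∏ v ∈ S,
      if v ≤ p v then ENNReal.ofReal (φ (y v - y (p v)))
      else ENNReal.ofReal (φ (y (p v) - y v)) := by
  rw [edgeProd, ENNReal.ofReal_prod_of_nonneg fun q _ => (hφ _).1]
  refine (G.prod_edges_le_prod_parent (fun a b => ENNReal.ofReal (φ (y a - y b)))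
    (fun a b => ENNReal.ofReal_le_one.2 (hφ _).2) p D S hadj hD).trans_eq ?_
  refine prod_congr rfl fun v _ => ?_
  simp only [min_def, max_def]
  split_ifs <;> rfl

theorem lintegral_edgeProd_pts_le (hφmeas : Measurable φ)
    (hφrange : ∀ x, φ x ∈ Set.Icc (0 : ℝ) 1) (hφint : Integrable φ) {n : ℕ}
    {G : SimpleGraph (Fin (n + 2))} (hG : G.Connected) :
    ∫⁻ q : EuclideanSpace ℝ (Fin d) × (Fin n → EuclideanSpace ℝ (Fin d)),
        ENNReal.ofReal (edgeProd φ G (pts q.1 q.2))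
      ≤ ENNReal.ofReal (∫ x, φ x) ^ (n + 1) := by
  set ℓ : EuclideanSpace ℝ (Fin d) → ℝ≥0∞ := fun z => ENNReal.ofReal (φ z)
  have hℓ : ∫⁻ z, ℓ z = ENNReal.ofReal (∫ x, φ x) :=
    (ofReal_integral_eq_lintegral_ofReal hφint (ae_of_all _ fun x => (hφrange x).1)).symm
  choose! par hadj hlt using fun (v : Fin (n + 2)) (hv : v ≠ 0) => hG.exists_adj_dist_lt hv
  set S : Finset (Fin (n + 2)) := univ.image Fin.succ
  have hS : ∀ v ∈ S, v ≠ 0 := by simp [S]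
  set k : Fin (n + 2) → EuclideanSpace ℝ (Fin d) → EuclideanSpace ℝ (Fin d) → ℝ≥0∞ :=
    fun v s t => if v ≤ par v then ℓ (s - t) else ℓ (t - s)
  have hk : ∀ v c, ∫⁻ t, k v t c ≤ ENNReal.ofReal (∫ x, φ x) := by
    intro v c
    simp only [k]
    split_ifs
    · rw [lintegral_sub_right_eq_self ℓ c, hℓ]
    · rw [lintegral_sub_left_eq_self ℓ c, hℓ]
  have hkmeas : ∀ v, Measurable (Function.uncurry (k v)) := by
    intro v
    simp only [k]
    split_ifs <;> fun_prop
  have hF : Measurable fun y => ENNReal.ofReal (edgeProd φ G y) :=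
    ENNReal.measurable_ofReal.comp (measurable_edgeProd hφmeas G)
  calc ∫⁻ q : EuclideanSpace ℝ (Fin d) × (Fin n → EuclideanSpace ℝ (Fin d)),
        ENNReal.ofReal (edgeProd φ G (pts q.1 q.2))
      = ∫⁻ z, ENNReal.ofReal (edgeProd φ G (Fin.cons 0 z)) ∂Measure.pi fun _ => volume := by
        rw [Measure.volume_eq_prod]
        exact (measurePreserving_snoc volume).lintegral_comp (hF.comp (measurable_fin_cons 0))
    _ = (∫⋯∫⁻_S, fun y => ENNReal.ofReal (edgeProd φ G y)) 0 :=
        (lmarginal_image_succ volume hF 0).symm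
    _ ≤ (∫⋯∫⁻_S, fun y => ∏ v ∈ S, k v (y v) (y (par v))) 0 :=
        lmarginal_mono (ofReal_edgeProd_le_prod_parent hφrange G par (G.dist · 0) S
          (fun v hv => hadj v (hS v hv)) (fun v hv => hlt v (hS v hv))) 0
    _ ≤ ENNReal.ofReal (∫ x, φ x) ^ #S :=
        lmarginal_prod_parent_le_pow volume k hkmeas hk par (G.dist · 0) S
          (fun v hv => hlt v (hS v hv)) 0
    _ = ENNReal.ofReal (∫ x, φ x) ^ (n + 1) := by
        rw [card_image_of_injective _ (Fin.succ_injective _), card_univ, Fintype.card_fin]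

end Cluster

theorem Jfun_integrable_and_bound_general
    {d : ℕ} (φ : EuclideanSpace ℝ (Fin d) → ℝ)
    (hφmeas : Measurable φ) (hφrange : ∀ x, φ x ∈ Set.Icc (0 : ℝ) 1)
    (hφint : Integrable φ)
    (n : ℕ) (G : SimpleGraph (Fin (n + 2))) (hG : G.Connected) :
    Integrable (Jfun φ n G) ∧ (∫ x, Jfun φ n G x) ≤ (∫ x, φ x) ^ (n + 1) := by
  have hφ₀ : ∀ x, 0 ≤ φ x := fun x => (hφrange x).1
  have hm : 0 ≤ ∫ x, φ x := integral_nonneg hφ₀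
  obtain ⟨hint, hle⟩ := integrable_and_integral_le_of_lintegral_ofReal_le
    ((measurable_edgeProd hφmeas G).comp measurable_pts).aestronglyMeasurable
    (ae_of_all _ fun q => edgeProd_nonneg hφ₀ G _) (pow_nonneg hm (n + 1))
    ((lintegral_edgeProd_pts_le hφmeas hφrange hφint hG).trans_eq (ENNReal.ofReal_pow hm _).symm)
  rw [Measure.volume_eq_prod] at hint hle
  exact ⟨hint.integral_prod_left, (integral_prod _ hint).symm.trans_le hle⟩

/-- For connected `G ∈ 𝒢_n`, the function `x ↦ J_n(G,x)` is integrable with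
`∫ J_n(G,x) dx ≤ m_φ^{n+1}`. -/
theorem Jfun_integrable_and_bound
    {d : ℕ} (hd : 1 ≤ d) (φ : EuclideanSpace ℝ (Fin d) → ℝ)
    (hφmeas : Measurable φ) (hφrange : ∀ x, φ x ∈ Set.Icc (0 : ℝ) 1)
    (hφsymm : ∀ x, φ (-x) = φ x)
    (hφint : Integrable φ) (hφpos : 0 < ∫ x, φ x)
    (n : ℕ) (G : SimpleGraph (Fin (n + 2))) (hG : G.Connected) :
    Integrable (Jfun φ n G) ∧ (∫ x, Jfun φ n G x) ≤ (∫ x, φ x) ^ (n + 1) :=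
  Jfun_integrable_and_bound_general φ hφmeas hφrange hφint n G hG
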